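/- For every complex number s with Re(s) > 1/2, the double series Σ_{r∣6} μ(r) Σ_{c≥1, (6/r)∣c, gcd(c,r)=1} k(−r̄,0;c)·(c√r)^{−2s} converges absolutely, and (2π^{s+1}/((s−1/2)Γ(s))) · Σ_{r∣6} μ(r) Σ_{c≥1, (6/r)∣c, gcd(c,r)=1} k(−r̄,0;c)·(c√r)^{−2s} = 4π^{s+1}/((2s−1)Γ(s)(2^s−1)(3^s−1)ζ(2s)). -/

import Mathlib

open Complex Filter

/-- The ordinary Kloosterman sum `k(a, 0; c) = Σ_{0 ≤ d < c, gcd(d,c)=1} e(a·d*/c)`,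
where the first argument is given as a residue class `a : ZMod c` and `d*` is the
inverse of `d` modulo `c`.  (For `c = 0` the sum is empty.) -/
noncomputable def kloosterman0 (c : ℕ) (a : ZMod c) : ℂ :=
  ∑ d ∈ (Finset.range c).filter (fun d => Nat.Coprime d c),
    Complex.exp (2 * Real.pi * Complex.I *
      (((a * ((d : ZMod c)⁻¹)).val : ℝ) / (c : ℝ)))

/-- The `c`-th term of the inner series for a divisor `r` of `6`:
`k(−r̄, 0; c) · (c√r)^{−2s}` when `c ≥ 1`, `(6/r) ∣ c` and `gcd(c,r) = 1`, else `0`. -/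
noncomputable def innerTerm (s : ℂ) (r c : ℕ) : ℂ :=
  if 1 ≤ c ∧ (6 / r) ∣ c ∧ Nat.Coprime c r then
    kloosterman0 c (-((r : ZMod c)⁻¹)) * (((c : ℝ) * Real.sqrt r : ℝ) : ℂ) ^ (-2 * s)
  else 0

/-!
For a unit `a` modulo `c`, the map `d ↦ a d*` permutes the reduced residues, so `k(a, 0; c)` is
the Ramanujan sum `c_c(1) = μ(c)`. Writing `c = (6/r) m`, multiplicativity of `μ` turns the inner
series into `μ(6/r) (6/r)^{-2s} r^{-s} Σ_{(m,6)=1} μ(m) m^{-2s}`, and the last factor is the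
reciprocal of the `L`-series of the trivial character mod `6`, i.e. of
`(1 - 2^{-2s}) (1 - 3^{-2s}) ζ(2s)`. Summing over the four divisors `r` leaves
`((2^s - 1) (3^s - 1) ζ(2s))⁻¹`.
-/

open Finset ArithmeticFunction
open scoped ArithmeticFunction.Moebius LSeries.notation

/-- The Ramanujan sum `c_n(1)`, i.e. the sum of the primitive `n`-th roots of unity. -/
noncomputable def ramanujanSum (n : ℕ) : ℂ :=
  ∑ d ∈ (range n).filter (fun d => Nat.Coprime d n),
    Complex.exp (2 * Real.pi * Complex.I * ((d : ℝ) / (n : ℝ)))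

lemma sum_range_exp_two_pi_I_mul_div {n : ℕ} (hn : 1 < n) :
    ∑ k ∈ range n, Complex.exp (2 * Real.pi * Complex.I * ((k : ℝ) / (n : ℝ))) = 0 := by
  have hn0 : (n : ℂ) ≠ 0 := by exact_mod_cast (show n ≠ 0 by omega)
  rw [← (Complex.isPrimitiveRoot_exp n (by omega)).geom_sum_eq_zero hn]
  refine sum_congr rfl fun k _ => ?_
  rw [← Complex.exp_nat_mul]
  push_cast
  field_simp

lemma ramanujanSum_eq_sum_gcd_eq {d m : ℕ} (hd : 0 < d) :
    ramanujanSum m = ∑ k ∈ (range (d * m)).filter (fun k => (d * m).gcd k = d),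
      Complex.exp (2 * Real.pi * Complex.I * ((k : ℝ) / ((d * m : ℕ) : ℝ))) := by
  refine sum_nbij' (d * ·) (· / d) (fun j hj => ?_) (fun k hk => ?_) (fun j _ => ?_)
    (fun k hk => ?_) (fun j _ => ?_)
  · simp only [mem_filter, mem_range] at hj ⊢
    refine ⟨by nlinarith, ?_⟩
    rw [Nat.gcd_mul_left, Nat.gcd_comm, hj.2, mul_one]
  · simp only [mem_filter, mem_range] at hk ⊢
    obtain ⟨j, rfl⟩ : d ∣ k := hk.2 ▸ Nat.gcd_dvd_right _ _
    rw [Nat.gcd_mul_left, Nat.mul_eq_left hd.ne'] at hk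
    rw [Nat.mul_div_cancel_left j hd]
    exact ⟨by nlinarith, Nat.coprime_comm.mp hk.2⟩
  · exact Nat.mul_div_cancel_left j hd
  · simp only [mem_filter] at hk
    exact Nat.mul_div_cancel' (hk.2 ▸ Nat.gcd_dvd_right _ _)
  · have hd' : (d : ℂ) ≠ 0 := by exact_mod_cast hd.ne'
    push_cast
    rw [mul_div_mul_left _ _ hd']

lemma sum_divisors_ramanujanSum {n : ℕ} (hn : 0 < n) :
    ∑ d ∈ n.divisors, ramanujanSum d = if n = 1 then 1 else 0 := by
  rw [← Nat.sum_div_divisors]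
  have hfiber : ∀ d ∈ n.divisors, ramanujanSum (n / d) =
      ∑ k ∈ (range n).filter (fun k => n.gcd k = d),
        Complex.exp (2 * Real.pi * Complex.I * ((k : ℝ) / (n : ℝ))) := by
    intro d hd
    rw [ramanujanSum_eq_sum_gcd_eq (Nat.pos_of_mem_divisors hd),
      Nat.mul_div_cancel' (Nat.dvd_of_mem_divisors hd)]
  rw [sum_congr rfl hfiber,
    sum_fiberwise_of_maps_to fun k _ => Nat.mem_divisors.mpr ⟨Nat.gcd_dvd_left _ _, hn.ne'⟩]
  split_ifs with h1
  · subst h1; simp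
  · exact sum_range_exp_two_pi_I_mul_div (by omega)

lemma ramanujanSum_eq_moebius {n : ℕ} (hn : 0 < n) : ramanujanSum n = μ n := by
  rw [← (sum_eq_iff_sum_mul_moebius_eq.mp fun _ => sum_divisors_ramanujanSum) n hn,
    Nat.sum_divisorsAntidiagonal' (fun a b => (μ a : ℂ) * if b = 1 then 1 else 0)]
  simp [hn.ne']

lemma ZMod.mul_inv_mul_inv_cancel {c : ℕ} {a x : ZMod c} (ha : IsUnit a) (hx : IsUnit x) :
    a * (a * x⁻¹)⁻¹ = x := by
  obtain ⟨u, rfl⟩ := ha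
  obtain ⟨v, rfl⟩ := hx
  rw [ZMod.inv_coe_unit, ← Units.val_mul, ZMod.inv_coe_unit, ← Units.val_mul, mul_inv_rev,
    inv_inv, mul_comm v, mul_inv_cancel_left]

lemma kloosterman0_eq_ramanujanSum {c : ℕ} [NeZero c] {a : ZMod c} (ha : IsUnit a) :
    kloosterman0 c a = ramanujanSum c := by
  -- `d ↦ a d⁻¹` is an involution of the reduced residues.
  have hunit : ∀ d ∈ (range c).filter (fun d => Nat.Coprime d c), IsUnit (d : ZMod c) :=
    fun d hd => (ZMod.isUnit_iff_coprime d c).mpr (mem_filter.mp hd).2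
  have hmaps : ∀ d ∈ (range c).filter (fun d => Nat.Coprime d c),
      (a * (d : ZMod c)⁻¹).val ∈ (range c).filter (fun d => Nat.Coprime d c) := by
    intro d hd
    obtain ⟨v, hv⟩ := hunit d hd
    obtain ⟨u, hu⟩ : IsUnit (a * (d : ZMod c)⁻¹) :=
      ha.mul (by rw [← hv, ZMod.inv_coe_unit]; exact Units.isUnit _)
    exact mem_filter.mpr ⟨mem_range.mpr (ZMod.val_lt _), hu ▸ ZMod.val_coe_unit_coprime u⟩
  have hinvol : ∀ d ∈ (range c).filter (fun d => Nat.Coprime d c),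
      (a * ((a * (d : ZMod c)⁻¹).val : ZMod c)⁻¹).val = d := by
    intro d hd
    rw [ZMod.natCast_zmod_val, ZMod.mul_inv_mul_inv_cancel ha (hunit d hd),
      ZMod.val_cast_of_lt (mem_range.mp (mem_filter.mp hd).1)]
  exact sum_nbij' _ _ hmaps hmaps hinvol hinvol fun _ _ => rfl

lemma kloosterman0_eq_moebius {c : ℕ} (hc : 0 < c) {a : ZMod c} (ha : IsUnit a) :
    kloosterman0 c a = μ c := by
  have : NeZero c := ⟨hc.ne'⟩
  rw [kloosterman0_eq_ramanujanSum ha, ramanujanSum_eq_moebius hc]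

lemma moebius_mul_eq_ite (m n : ℕ) : μ (m * n) = if m.Coprime n then μ m * μ n else 0 := by
  split_ifs with h
  · exact isMultiplicative_moebius.map_mul_of_coprime h
  · exact moebius_eq_zero_of_not_squarefree fun hsq => h (Nat.squarefree_mul_iff.mp hsq).1

lemma moebius_six : μ 6 = 1 := by
  rw [show 6 = 2 * 3 from rfl, moebius_mul_eq_ite, if_pos (by norm_num),
    moebius_apply_prime Nat.prime_two, moebius_apply_prime Nat.prime_three]
  rfl

lemma Nat.primeFactors_six : Nat.primeFactors 6 = {2, 3} := by
  rw [show 6 = 2 * 3 from rfl, Nat.primeFactors_mul two_ne_zero three_ne_zero,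
    Nat.prime_two.primeFactors, Nat.prime_three.primeFactors]
  rfl

lemma ofReal_mul_sqrt_cpow_two_mul {x y : ℝ} (hx : 0 ≤ x) (hy : 0 ≤ y) (w : ℂ) :
    ((x * √y : ℝ) : ℂ) ^ (2 * w) = (x : ℂ) ^ (2 * w) * (y : ℂ) ^ w := by
  rw [Complex.ofReal_mul, mul_cpow_ofReal_nonneg hx (Real.sqrt_nonneg y), Real.sqrt_eq_rpow,
    ← Complex.cpow_mul_ofReal_nonneg hy]
  congr 2
  push_cast
  ring

lemma one_lt_norm_natCast_cpow {n : ℕ} (hn : 1 < n) {s : ℂ} (hs : 0 < s.re) :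
    1 < ‖(n : ℂ) ^ s‖ := by
  rw [Complex.norm_natCast_cpow_of_pos (by omega)]
  exact Real.one_lt_rpow (by exact_mod_cast hn) hs

lemma sub_one_ne_zero_of_one_lt_norm {𝕜 : Type*} [NormedRing 𝕜] [NormOneClass 𝕜] {x : 𝕜}
    (hx : 1 < ‖x‖) : x - 1 ≠ 0 := by
  rintro h
  rw [sub_eq_zero.mp h, norm_one] at hx
  exact lt_irrefl _ hx

lemma DirichletCharacter.one_apply_natCast {N : ℕ} (n : ℕ) :
    (1 : DirichletCharacter ℂ N) n = if n.Coprime N then 1 else 0 := by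
  split_ifs with h
  · exact MulChar.one_apply ((ZMod.isUnit_iff_coprime n N).mpr h)
  · exact MulChar.map_nonunit _ (mt (ZMod.isUnit_iff_coprime n N).mp h)

lemma LSeries_one_mul_moebius {N : ℕ} [NeZero N] {w : ℂ} (hw : 1 < w.re) :
    L (↗(1 : DirichletCharacter ℂ N) * ↗μ) w
      = ((∏ p ∈ N.primeFactors, (1 - (p : ℂ) ^ (-w))) * riemannZeta w)⁻¹ := by
  have hw1 : w ≠ 1 := by rintro rfl; simp at hw
  rw [← DirichletCharacter.LFunctionTrivChar_eq_mul_riemannZeta hw1,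
    DirichletCharacter.LFunctionTrivChar, DirichletCharacter.LFunction_eq_LSeries _ hw]
  exact (eq_inv_of_mul_eq_one_right (DirichletCharacter.LSeries.mul_mu_eq_one _ hw))

lemma support_innerTerm_subset (s : ℂ) (r : ℕ) :
    Function.support (innerTerm s r) ⊆ Set.range (6 / r * ·) := fun _ hc =>
  by_contra fun h => hc (if_neg fun hcond => h (hcond.2.1.imp fun _ hm => hm.symm))

lemma mul_six_div_injective {r : ℕ} (hr : r ∣ 6) : Function.Injective (6 / r * ·) :=
  mul_right_injective₀ (Nat.div_pos (Nat.le_of_dvd (by norm_num) hr)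
    (Nat.pos_of_dvd_of_pos hr (by norm_num))).ne'

lemma coprime_six_div_self {r : ℕ} (hr : r ∣ 6) : (6 / r).Coprime r := by
  have h6 : Squarefree (6 / r * r) := by
    rw [Nat.div_mul_cancel hr]
    simp [Nat.squarefree_iff_nodup_primeFactorsList]
  exact (Nat.squarefree_mul_iff.mp h6).1

lemma innerTerm_div_mul (s : ℂ) {r : ℕ} (hr : r ∣ 6) (m : ℕ) :
    innerTerm s r (6 / r * m) = μ (6 / r) * ((6 / r : ℕ) : ℂ) ^ (-2 * s) * (r : ℂ) ^ (-s) *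
      LSeries.term (↗(1 : DirichletCharacter ℂ 6) * ↗μ) (2 * s) m := by
  set q := 6 / r
  have hqr : q * r = 6 := Nat.div_mul_cancel hr
  have hq0 : q ≠ 0 := by rintro h; simp [h] at hqr
  have hcop : q.Coprime r := coprime_six_div_self hr
  rcases eq_or_ne m 0 with rfl | hm
  · simp [innerTerm]
  -- `μ (q * m)` vanishes unless `m` is coprime to `q`; with `gcd(m, r) = 1` this is `gcd(m, 6) = 1`.
  rw [LSeries.term_of_ne_zero hm, Pi.mul_apply, DirichletCharacter.one_apply_natCast, ← hqr]
  simp only [Nat.coprime_mul_iff_right]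
  unfold innerTerm
  by_cases hmr : m.Coprime r
  swap
  · rw [if_neg fun h => hmr (Nat.coprime_mul_iff_left.mp h.2.2).2, if_neg fun h => hmr h.2]
    simp
  have hc : 1 ≤ q * m ∧ q ∣ q * m ∧ (q * m).Coprime r :=
    ⟨Nat.one_le_iff_ne_zero.mpr (mul_ne_zero hq0 hm), dvd_mul_right q m, hcop.mul_left hmr⟩
  have hunit : IsUnit (-((r : ZMod (q * m))⁻¹)) :=
    (IsUnit.of_mul_eq_one _ (ZMod.inv_mul_of_unit _
      ((ZMod.isUnit_iff_coprime r _).mpr hc.2.2.symm))).neg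
  rw [if_pos hc, kloosterman0_eq_moebius (by omega) hunit, show -2 * s = 2 * -s by ring,
    ofReal_mul_sqrt_cpow_two_mul (Nat.cast_nonneg _) (Nat.cast_nonneg _), Complex.ofReal_natCast,
    Complex.ofReal_natCast, moebius_mul_eq_ite, Nat.cast_mul, Complex.natCast_mul_natCast_cpow,
    mul_neg, Complex.cpow_neg, Complex.cpow_neg]
  by_cases hmq : m.Coprime q
  · rw [if_pos hmq.symm, if_pos ⟨hmq, hmr⟩]
    push_cast
    ring
  · rw [if_neg fun h => hmq h.symm, if_neg fun h => hmq h.1]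
    simp

lemma summable_norm_innerTerm {s : ℂ} (hs : 1 / 2 < s.re) {r : ℕ} (hr : r ∣ 6) :
    Summable fun c => ‖innerTerm s r c‖ := by
  have hw : 1 < (2 * s).re := by norm_num; linarith
  have hvanish : ∀ c ∉ Set.range (6 / r * ·), ‖innerTerm s r c‖ = 0 := fun c hc =>
    norm_eq_zero.mpr (Function.notMem_support.mp (mt (support_innerTerm_subset s r ·) hc))
  refine ((mul_six_div_injective hr).summable_iff hvanish).mp ?_
  simp only [Function.comp_def, innerTerm_div_mul s hr]
  exact (Summable.mul_left _
    (DirichletCharacter.LSeriesSummable_mul _ (LSeriesSummable_moebius_iff.mpr hw))).norm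

lemma tsum_innerTerm (s : ℂ) {r : ℕ} (hr : r ∣ 6) :
    ∑' c, innerTerm s r c = μ (6 / r) * ((6 / r : ℕ) : ℂ) ^ (-2 * s) * (r : ℂ) ^ (-s) *
      L (↗(1 : DirichletCharacter ℂ 6) * ↗μ) (2 * s) := by
  rw [LSeries, ← tsum_mul_left,
    ← (mul_six_div_injective hr).tsum_eq (support_innerTerm_subset s r)]
  exact tsum_congr (innerTerm_div_mul s hr)

lemma sum_moebius_mul_tsum_innerTerm {s : ℂ} (hs : 1 / 2 < s.re) :
    ∑ r ∈ Nat.divisors 6, (μ r : ℂ) * ∑' c, innerTerm s r c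
      = (((2 : ℂ) ^ s - 1) * ((3 : ℂ) ^ s - 1) * riemannZeta (2 * s))⁻¹ := by
  have hw : 1 < (2 * s).re := by norm_num; linarith
  have hs0 : 0 < s.re := by linarith
  have h6 : (6 : ℂ) ^ s = 2 ^ s * 3 ^ s := by
    rw [show (6 : ℂ) = (2 : ℕ) * (3 : ℕ) by norm_num, Complex.natCast_mul_natCast_cpow]
    norm_num
  rw [sum_congr rfl fun r hr => by rw [tsum_innerTerm s (Nat.dvd_of_mem_divisors hr)],
    LSeries_one_mul_moebius hw, Nat.primeFactors_six, prod_pair (by norm_num),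
    show Nat.divisors 6 = {1, 2, 3, 6} by decide, sum_insert (by decide), sum_insert (by decide),
    sum_insert (by decide), sum_singleton]
  norm_num [moebius_six, moebius_apply_prime, Complex.cpow_neg, Complex.cpow_ofNat_mul, h6]
  have hne : ∀ x : ℂ, 1 < ‖x‖ → x ≠ 0 ∧ x - 1 ≠ 0 ∧ x ^ 2 - 1 ≠ 0 := fun x hx =>
    ⟨norm_pos_iff.mp (one_pos.trans hx), sub_one_ne_zero_of_one_lt_norm hx,
      sub_one_ne_zero_of_one_lt_norm (by rw [norm_pow]; exact one_lt_pow₀ hx two_ne_zero)⟩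
  obtain ⟨_, _, _⟩ := hne _ (by exact_mod_cast one_lt_norm_natCast_cpow (n := 2) (by norm_num) hs0)
  obtain ⟨_, _, _⟩ := hne _ (by exact_mod_cast one_lt_norm_natCast_cpow (n := 3) (by norm_num) hs0)
  field_simp
  ring

theorem constant_coefficient_evaluation (s : ℂ) (hs : 1 / 2 < s.re) :
    (∀ r ∈ Nat.divisors 6, Summable (fun c : ℕ => ‖innerTerm s r c‖)) ∧
    (2 * (Real.pi : ℂ) ^ (s + 1) / ((s - 1 / 2) * Complex.Gamma s)) *
        ∑ r ∈ Nat.divisors 6,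
          ((ArithmeticFunction.moebius r : ℤ) : ℂ) * ∑' c : ℕ, innerTerm s r c =
      4 * (Real.pi : ℂ) ^ (s + 1) /
        ((2 * s - 1) * Complex.Gamma s * ((2 : ℂ) ^ s - 1) * ((3 : ℂ) ^ s - 1) *
          riemannZeta (2 * s)) := by
  refine ⟨fun r hr => summable_norm_innerTerm hs (Nat.dvd_of_mem_divisors hr), ?_⟩
  rw [sum_moebius_mul_tsum_innerTerm hs, show 2 * s - 1 = 2 * (s - 1 / 2) by ring]
  field_simp
  ring
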